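/- For the Saint Venant–Kirchhoff stress P(F) = F(G FᵀF + (L/2)|F|² Id − (G + Ld/2) Id) with G > 0 and G + dL/2 > 0, and H(y,F) = (1/4)|y|⁴ + ((G+L/2)/2)|FᵀF|², the function g(A,a,B) = sup_{F ∈ ℝ^{d×d}, y ∈ ℝ^d} [a·y + A:F + B:P(F) − H(y,F)] satisfies g(A,a,B) ≥ c(|a|^{4/3} + |A|^{4/3} + |B|⁴) − 1/c for some constant c > 0 depending only on G, L, d, for all (A,a,B). -/

import Mathlib

open Matrix

noncomputable def frob {d : ℕ} (F : Matrix (Fin d) (Fin d) ℝ) : ℝ :=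
  Real.sqrt (∑ i, ∑ j, (F i j) ^ 2)

noncomputable def mdot {d : ℕ} (A B : Matrix (Fin d) (Fin d) ℝ) : ℝ :=
  ∑ i, ∑ j, A i j * B i j

/-- The Saint Venant–Kirchhoff first Piola–Kirchhoff stress. -/
noncomputable def svkP (G L : ℝ) {d : ℕ} (F : Matrix (Fin d) (Fin d) ℝ) :
    Matrix (Fin d) (Fin d) ℝ :=
  F * (G • (Fᵀ * F) + ((L / 2) * frob F ^ 2) • (1 : Matrix (Fin d) (Fin d) ℝ)
    - (G + L * d / 2) • (1 : Matrix (Fin d) (Fin d) ℝ))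

/-- The auxiliary potential H(y,F). -/
noncomputable def svkH (G L : ℝ) {d : ℕ} (y : EuclideanSpace ℝ (Fin d))
    (F : Matrix (Fin d) (Fin d) ℝ) : ℝ :=
  (1/4) * ‖y‖ ^ 4 + ((G + L / 2) / 2) * frob (Fᵀ * F) ^ 2

/-- The set over which the dual integrand g(A,a,B) is a supremum. -/
noncomputable def svkSet (G L : ℝ) {d : ℕ} (A : Matrix (Fin d) (Fin d) ℝ)
    (a : EuclideanSpace ℝ (Fin d)) (B : Matrix (Fin d) (Fin d) ℝ) : Set ℝ :=
  { z | ∃ (F : Matrix (Fin d) (Fin d) ℝ) (y : EuclideanSpace ℝ (Fin d)),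
      z = (∑ i, a i * y i) + mdot A F + mdot B (svkP G L F) - svkH G L y F }

/-!
Three families of test points bound the supremum from below. `F = 0` with `y` parallel to `a`
gives `(3/4)|a|^{4/3}`. For `F = tB`, `y = 0`,
`B : P(tB) - H(0, tB) = (G - (G + L/2)t/2) t³|BᵀB|² + (L/2) t³|B|⁴ - (G + dL/2) t|B|²`,
and `|B|⁴ ≤ d|BᵀB|²` makes the quartic part at least `(G + dL/2) t³|B|⁴/(2d)` for `t` small;
this absorbs the cross term `t A : B` as long as `|B| ≥ k|A|^{1/3}`. Otherwise
`F = θ|A|^{-2/3}A` gives `A : F = θ|A|^{4/3}`, while the growth of `P` costs at most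
`|B|(θ³|A| + θ|A|^{1/3})`, which is small for `θ` small because `|B|` is now controlled by
`|A|^{1/3}`. The supremum is finite because `H` is quartically coercive in `F`.
-/

section RealInequalities

lemma mul_pow_three_le {x y ε : ℝ} (hx : 0 ≤ x) (hy : 0 ≤ y) (hε : 0 < ε) :
    x * y ^ 3 ≤ ε * y ^ 4 + x ^ 4 / ε ^ 3 := by
  have hv : 0 ≤ ε * y := by positivity
  have hmax : x * (ε * y) ^ 3 ≤ (ε * y) ^ 4 + x ^ 4 := by
    rcases le_total x (ε * y) with h | h
    · nlinarith [mul_le_mul_of_nonneg_right h (pow_nonneg hv 3), pow_nonneg hx 4]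
    · nlinarith [mul_le_mul_of_nonneg_left (pow_le_pow_left₀ hv h 3) hx, pow_nonneg hv 4]
  have hsplit : ε * y ^ 4 + x ^ 4 / ε ^ 3 - x * y ^ 3
      = ((ε * y) ^ 4 + x ^ 4 - x * (ε * y) ^ 3) / ε ^ 3 := by
    field_simp
  rw [← sub_nonneg, hsplit]
  exact div_nonneg (by linarith) (by positivity)

lemma mul_add_mul_pow_three_sub_le {β γ m X : ℝ} (hβ : 0 ≤ β) (hγ : 0 ≤ γ) (hm : 0 < m)
    (hX : 0 ≤ X) : β * X + γ * X ^ 3 - m * X ^ 4 ≤ (β + γ) + (β + γ) ^ 4 / m ^ 3 := by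
  have hX3 : X ≤ 1 + X ^ 3 := by
    rcases le_total X 1 with h | h
    · nlinarith [pow_nonneg hX 3]
    · nlinarith [one_le_pow₀ h (n := 2)]
  nlinarith [mul_le_mul_of_nonneg_left hX3 hβ, mul_pow_three_le (add_nonneg hβ hγ) hX hm]

lemma quartic_lower_bound_of_mul_le {p q r k u b S : ℝ} (hp : 0 < p) (hk : 1 ≤ k)
    (hq : q ≤ p / 2 * k ^ 3) (hu : 0 ≤ u) (hkub : k * u ≤ b)
    (hS : p * b ^ 4 - q * u ^ 3 * b - r * b ^ 2 ≤ S) :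
    p / 8 * (u ^ 4 + b ^ 4) - r ^ 2 / p ≤ S := by
  have hb : 0 ≤ b := le_trans (by positivity) hkub
  have hub : u ≤ b := le_trans (le_mul_of_one_le_left hu hk) hkub
  have hcross : q * u ^ 3 * b ≤ p / 2 * b ^ 4 := by
    calc q * u ^ 3 * b ≤ p / 2 * k ^ 3 * u ^ 3 * b := by gcongr
      _ = p / 2 * (k * u) ^ 3 * b := by ring
      _ ≤ p / 2 * b ^ 3 * b := by gcongr
      _ = p / 2 * b ^ 4 := by ring
  have hsq : r * b ^ 2 ≤ p / 4 * b ^ 4 + r ^ 2 / p := by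
    rw [← sub_nonneg]
    have : p / 4 * b ^ 4 + r ^ 2 / p - r * b ^ 2 = (p * b ^ 2 - 2 * r) ^ 2 / (4 * p) := by
      field_simp
      ring
    rw [this]
    positivity
  have hu4 : u ^ 4 ≤ b ^ 4 := by gcongr
  nlinarith

lemma quartic_lower_bound_of_le_mul {D₁ D₂ M k θ u b S : ℝ} (hθ : 0 ≤ θ) (hθ₁ : θ ≤ 1)
    (hθk : θ * (D₁ * k + M) ≤ 1 / 4) (hD₁ : 0 ≤ D₁) (hD₂ : 0 ≤ D₂) (hM : 0 ≤ M) (hk : 0 ≤ k)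
    (hu : 0 ≤ u) (hb : 0 ≤ b) (hbku : b ≤ k * u)
    (hS : θ * u ^ 4 - b * (D₁ * (θ * u) ^ 3 + D₂ * (θ * u)) - M * (θ * u) ^ 4 ≤ S) :
    θ / (2 * (1 + k ^ 4)) * (u ^ 4 + b ^ 4) - θ * (D₂ * k) ^ 2 ≤ S := by
  have hsmall : θ ^ 3 * (D₁ * k) + θ ^ 4 * M ≤ θ / 4 := by
    have hθ2 : θ ^ 3 ≤ θ ^ 2 := pow_le_pow_of_le_one hθ hθ₁ (by norm_num)
    have hθ3 : θ ^ 4 ≤ θ ^ 2 := pow_le_pow_of_le_one hθ hθ₁ (by norm_num)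
    nlinarith [mul_le_mul_of_nonneg_left hθk hθ, mul_nonneg hD₁ hk]
  have hcube : b * (D₁ * (θ * u) ^ 3) ≤ θ ^ 3 * (D₁ * k) * u ^ 4 := by
    calc b * (D₁ * (θ * u) ^ 3) = D₁ * θ ^ 3 * u ^ 3 * b := by ring
      _ ≤ D₁ * θ ^ 3 * u ^ 3 * (k * u) := by gcongr
      _ = θ ^ 3 * (D₁ * k) * u ^ 4 := by ring
  have hlinear : b * (D₂ * (θ * u)) ≤ θ / 4 * u ^ 4 + θ * (D₂ * k) ^ 2 := by
    calc b * (D₂ * (θ * u)) ≤ k * u * (D₂ * (θ * u)) := by gcongr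
      _ ≤ θ / 4 * u ^ 4 + θ * (D₂ * k) ^ 2 := by nlinarith [sq_nonneg (u ^ 2 - 2 * D₂ * k)]
  have hmain : θ / 2 * u ^ 4 - θ * (D₂ * k) ^ 2 ≤ S := by
    nlinarith [mul_le_mul_of_nonneg_right hsmall (pow_nonneg hu 4)]
  have hb4 : b ^ 4 ≤ k ^ 4 * u ^ 4 := by rw [← mul_pow]; gcongr
  calc θ / (2 * (1 + k ^ 4)) * (u ^ 4 + b ^ 4) - θ * (D₂ * k) ^ 2
      ≤ θ / (2 * (1 + k ^ 4)) * ((1 + k ^ 4) * u ^ 4) - θ * (D₂ * k) ^ 2 := by gcongr; linarith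
    _ = θ / 2 * u ^ 4 - θ * (D₂ * k) ^ 2 := by field_simp
    _ ≤ S := hmain

lemma exists_quartic_lower_bound {p q r D₁ D₂ M : ℝ} (hp : 0 < p) (hq : 0 ≤ q) (hD₁ : 0 ≤ D₁)
    (hD₂ : 0 ≤ D₂) (hM : 0 ≤ M) :
    ∃ c > 0, ∃ K ≥ 0, ∀ u b S : ℝ, 0 ≤ u → 0 ≤ b →
      p * b ^ 4 - q * u ^ 3 * b - r * b ^ 2 ≤ S →
      (∀ θ, 0 ≤ θ → θ * u ^ 4 - b * (D₁ * (θ * u) ^ 3 + D₂ * (θ * u)) - M * (θ * u) ^ 4 ≤ S) →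
      c * (u ^ 4 + b ^ 4) - K ≤ S := by
  set k := 2 * q / p + 1
  set θ := 1 / (4 * (D₁ * k + M) + 1)
  have hk : 1 ≤ k := by simp only [k]; linarith [div_nonneg (mul_nonneg zero_le_two hq) hp.le]
  have hqk : q ≤ p / 2 * k ^ 3 := by
    have : q ≤ p / 2 * k := by simp only [k]; field_simp; linarith
    nlinarith [one_le_pow₀ (n := 2) hk]
  have hθ : 0 < θ := by positivity
  have hθ₁ : θ ≤ 1 := by simp only [θ]; rw [div_le_one (by positivity)]; nlinarith
  have hθk : θ * (D₁ * k + M) ≤ 1 / 4 := by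
    simp only [θ]; rw [div_mul_eq_mul_div, div_le_div_iff₀ (by positivity) (by norm_num)]; linarith
  refine ⟨min (p / 8) (θ / (2 * (1 + k ^ 4))), by positivity, r ^ 2 / p + θ * (D₂ * k) ^ 2,
    by positivity, fun u b S hu hb hSB hSA => ?_⟩
  rcases le_total (k * u) b with hkub | hbku
  · have := quartic_lower_bound_of_mul_le hp hk hqk hu hkub hSB
    have : min (p / 8) (θ / (2 * (1 + k ^ 4))) * (u ^ 4 + b ^ 4) ≤ p / 8 * (u ^ 4 + b ^ 4) := by
      gcongr; exact min_le_left _ _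
    linarith [mul_nonneg hθ.le (sq_nonneg (D₂ * k))]
  · have := quartic_lower_bound_of_le_mul hθ.le hθ₁ hθk hD₁ hD₂ hM (by linarith) hu hb hbku
      (hSA θ hθ.le)
    have : min (p / 8) (θ / (2 * (1 + k ^ 4))) * (u ^ 4 + b ^ 4)
        ≤ θ / (2 * (1 + k ^ 4)) * (u ^ 4 + b ^ 4) := by
      gcongr; exact min_le_right _ _
    linarith [div_nonneg (sq_nonneg r) hp.le]

lemma exists_lower_bound_of_quartic {c₀ K : ℝ} (hc₀ : 0 < c₀) (hK : 0 ≤ K) :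
    ∃ c > 0, ∀ X Y S : ℝ, 0 ≤ X → 0 ≤ Y → 3 / 4 * X ≤ S → c₀ * Y - K ≤ S →
      c * (X + Y) - 1 / c ≤ S := by
  refine ⟨min (min (3 / 8) (c₀ / 2)) (1 / (K + 1)), by positivity,
    fun X Y S hX hY hSX hSY => ?_⟩
  set c := min (min (3 / 8) (c₀ / 2)) (1 / (K + 1))
  have hc : 0 < c := by positivity
  have hcX : c * X ≤ 3 / 8 * X := by gcongr; exact (min_le_left _ _).trans (min_le_left _ _)
  have hcY : c * Y ≤ c₀ / 2 * Y := by gcongr; exact (min_le_left _ _).trans (min_le_right _ _)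
  have hKc : K + 1 ≤ 1 / c := by
    rw [le_div_iff₀ hc, mul_comm, ← le_div_iff₀ (by positivity)]; exact min_le_right _ _
  linarith

end RealInequalities

attribute [local instance] Matrix.frobeniusNormedAddCommGroup Matrix.frobeniusNormedSpace

section
variable {d : ℕ}

lemma frob_eq_norm (F : Matrix (Fin d) (Fin d) ℝ) : frob F = ‖F‖ := by
  simp [frob, frobenius_norm_def, Real.sqrt_eq_rpow]

lemma mdot_eq_trace (A B : Matrix (Fin d) (Fin d) ℝ) : mdot A B = trace (Aᵀ * B) := by
  simp only [mdot, trace, diag_apply, mul_apply, transpose_apply]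
  exact Finset.sum_comm

lemma mdot_le_norm_mul_norm (A F : Matrix (Fin d) (Fin d) ℝ) : mdot A F ≤ ‖A‖ * ‖F‖ := by
  simpa [mdot, ← frob_eq_norm, frob, ← Finset.univ_product_univ, Finset.sum_product] using
    Real.sum_mul_le_sqrt_mul_sqrt Finset.univ (fun p : Fin d × Fin d => A p.1 p.2)
      (fun p => F p.1 p.2)

lemma mdot_add_right (A M N : Matrix (Fin d) (Fin d) ℝ) :
    mdot A (M + N) = mdot A M + mdot A N := by
  simp only [mdot_eq_trace, Matrix.mul_add, trace_add]

lemma mdot_sub_right (A M N : Matrix (Fin d) (Fin d) ℝ) :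
    mdot A (M - N) = mdot A M - mdot A N := by
  simp only [mdot_eq_trace, Matrix.mul_sub, trace_sub]

lemma mdot_smul_right (A M : Matrix (Fin d) (Fin d) ℝ) (c : ℝ) :
    mdot A (c • M) = c * mdot A M := by
  simp only [mdot_eq_trace, Matrix.mul_smul, trace_smul, smul_eq_mul]

lemma neg_norm_mul_norm_le_mdot (A F : Matrix (Fin d) (Fin d) ℝ) : -(‖A‖ * ‖F‖) ≤ mdot A F := by
  have := mdot_le_norm_mul_norm A (-F)
  rw [← neg_one_smul ℝ F, mdot_smul_right, norm_smul] at this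
  simp only [norm_neg, norm_one, one_mul] at this
  linarith

lemma mdot_self (F : Matrix (Fin d) (Fin d) ℝ) : mdot F F = ‖F‖ ^ 2 := by
  rw [← frob_eq_norm, frob, Real.sq_sqrt (by positivity)]
  simp [mdot, sq]

lemma norm_pow_four_le (F : Matrix (Fin d) (Fin d) ℝ) : ‖F‖ ^ 4 ≤ d * ‖Fᵀ * F‖ ^ 2 := by
  have h : ‖F‖ ^ 2 ≤ √d * ‖Fᵀ * F‖ := by
    calc ‖F‖ ^ 2 = mdot 1 (Fᵀ * F) := by rw [← mdot_self, mdot_eq_trace, mdot_eq_trace]; simp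
      _ ≤ ‖(1 : Matrix (Fin d) (Fin d) ℝ)‖ * ‖Fᵀ * F‖ := mdot_le_norm_mul_norm _ _
      _ = √d * ‖Fᵀ * F‖ := by simp [← frob_eq_norm, frob, one_apply]
  calc ‖F‖ ^ 4 = (‖F‖ ^ 2) ^ 2 := by ring
    _ ≤ (√d * ‖Fᵀ * F‖) ^ 2 := by gcongr
    _ = d * ‖Fᵀ * F‖ ^ 2 := by rw [mul_pow, Real.sq_sqrt d.cast_nonneg]

lemma mdot_mul_transpose_mul_self (B : Matrix (Fin d) (Fin d) ℝ) :
    mdot B (B * (Bᵀ * B)) = ‖Bᵀ * B‖ ^ 2 := by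
  rw [← mdot_self, mdot_eq_trace, mdot_eq_trace, transpose_mul, transpose_transpose,
    Matrix.mul_assoc]

lemma svkP_eq (G L : ℝ) (F : Matrix (Fin d) (Fin d) ℝ) :
    svkP G L F = G • (F * (Fᵀ * F)) + (L / 2 * ‖F‖ ^ 2) • F - (G + L * d / 2) • F := by
  simp [svkP, frob_eq_norm, Matrix.mul_sub, Matrix.mul_add]

lemma norm_svkP_le (G L : ℝ) (F : Matrix (Fin d) (Fin d) ℝ) :
    ‖svkP G L F‖ ≤ (|G| + |L| / 2) * ‖F‖ ^ 3 + |G + L * d / 2| * ‖F‖ := by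
  have hcube : ‖F * (Fᵀ * F)‖ ≤ ‖F‖ ^ 3 := by
    calc ‖F * (Fᵀ * F)‖ ≤ ‖F‖ * (‖Fᵀ‖ * ‖F‖) :=
          (frobenius_norm_mul _ _).trans (by gcongr; exact frobenius_norm_mul _ _)
      _ = ‖F‖ ^ 3 := by rw [frobenius_norm_transpose]; ring
  rw [svkP_eq]
  calc _ ≤ ‖G • (F * (Fᵀ * F))‖ + ‖(L / 2 * ‖F‖ ^ 2) • F‖ + ‖(G + L * d / 2) • F‖ :=
        (norm_sub_le _ _).trans (by gcongr; exact norm_add_le _ _)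
    _ ≤ _ := by
      simp only [norm_smul, Real.norm_eq_abs, abs_mul, abs_div, abs_two, abs_pow, abs_norm]
      nlinarith [abs_nonneg G, abs_nonneg L, norm_nonneg F,
        mul_le_mul_of_nonneg_left hcube (abs_nonneg G)]

lemma mdot_svkP_smul (G L t : ℝ) (B : Matrix (Fin d) (Fin d) ℝ) :
    mdot B (svkP G L (t • B)) = G * t ^ 3 * ‖Bᵀ * B‖ ^ 2 + L / 2 * t ^ 3 * ‖B‖ ^ 4
      - (G + L * d / 2) * t * ‖B‖ ^ 2 := by
  simp only [svkP_eq, transpose_smul, Matrix.smul_mul, Matrix.mul_smul, smul_smul, mdot_add_right,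
    mdot_sub_right, mdot_smul_right, mdot_mul_transpose_mul_self, mdot_self, norm_smul]
  rw [Real.norm_eq_abs, mul_pow, sq_abs]
  ring

noncomputable def svkObjective (G L : ℝ) (A : Matrix (Fin d) (Fin d) ℝ)
    (a : EuclideanSpace ℝ (Fin d)) (B F : Matrix (Fin d) (Fin d) ℝ)
    (y : EuclideanSpace ℝ (Fin d)) : ℝ :=
  (∑ i, a i * y i) + mdot A F + mdot B (svkP G L F) - svkH G L y F

variable (G L : ℝ) (A : Matrix (Fin d) (Fin d) ℝ) (a : EuclideanSpace ℝ (Fin d))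
  (B : Matrix (Fin d) (Fin d) ℝ)

lemma svkObjective_eq (F : Matrix (Fin d) (Fin d) ℝ) (y : EuclideanSpace ℝ (Fin d)) :
    svkObjective G L A a B F y = (inner ℝ y a - ‖y‖ ^ 4 / 4)
      + (mdot A F + mdot B (svkP G L F) - (G + L / 2) / 2 * ‖Fᵀ * F‖ ^ 2) := by
  have hinner : ∑ i, a i * y i = inner ℝ y a := by simp [PiLp.inner_apply]
  rw [svkObjective, svkH, frob_eq_norm, hinner]
  ring

lemma svkObjective_zero_left (y : EuclideanSpace ℝ (Fin d)) :
    svkObjective G L A a B 0 y = inner ℝ y a - ‖y‖ ^ 4 / 4 := by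
  simp [svkObjective_eq, svkP, mdot_eq_trace]

lemma svkObjective_zero_right (F : Matrix (Fin d) (Fin d) ℝ) :
    svkObjective G L A a B F 0 =
      mdot A F + mdot B (svkP G L F) - (G + L / 2) / 2 * ‖Fᵀ * F‖ ^ 2 := by
  simp [svkObjective_eq]

lemma svkObjective_eq_add (F : Matrix (Fin d) (Fin d) ℝ) (y : EuclideanSpace ℝ (Fin d)) :
    svkObjective G L A a B F y = svkObjective G L A a B 0 y + svkObjective G L A a B F 0 := by
  rw [svkObjective_zero_left, svkObjective_zero_right, svkObjective_eq]

lemma svkObjective_zero_smul_self {w : ℝ} (hw : 0 ≤ w) (ha : ‖a‖ = w ^ 3) :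
    svkObjective G L A a B 0 ((w ^ 2)⁻¹ • a) = 3 / 4 * w ^ 4 := by
  rw [svkObjective_zero_left, real_inner_smul_left, real_inner_self_eq_norm_sq, norm_smul, ha,
    Real.norm_eq_abs, abs_inv, abs_pow, abs_of_nonneg hw]
  rcases hw.eq_or_lt with rfl | hw
  · simp
  · field_simp
    ring

lemma le_svkObjective_zero_right (hμ : 0 ≤ G + L / 2) (F : Matrix (Fin d) (Fin d) ℝ) :
    mdot A F - ‖B‖ * ((|G| + |L| / 2) * ‖F‖ ^ 3 + |G + L * d / 2| * ‖F‖)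
      - (G + L / 2) / 2 * ‖F‖ ^ 4 ≤ svkObjective G L A a B F 0 := by
  have hP := (neg_norm_mul_norm_le_mdot B (svkP G L F)).trans'
    (neg_le_neg (mul_le_mul_of_nonneg_left (norm_svkP_le G L F) (norm_nonneg B)))
  have hFF : ‖Fᵀ * F‖ ^ 2 ≤ ‖F‖ ^ 4 := by
    calc ‖Fᵀ * F‖ ^ 2 ≤ (‖Fᵀ‖ * ‖F‖) ^ 2 := by gcongr; exact frobenius_norm_mul _ _
      _ = ‖F‖ ^ 4 := by rw [frobenius_norm_transpose]; ring
  rw [svkObjective_zero_right]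
  nlinarith [mul_le_mul_of_nonneg_left hFF hμ]

lemma svkObjective_zero_right_le (hd : 0 < d) (hμ : 0 ≤ G + L / 2)
    (F : Matrix (Fin d) (Fin d) ℝ) :
    svkObjective G L A a B F 0 ≤ (‖A‖ + ‖B‖ * |G + L * d / 2|) * ‖F‖
      + ‖B‖ * (|G| + |L| / 2) * ‖F‖ ^ 3 - (G + L / 2) / (2 * d) * ‖F‖ ^ 4 := by
  have hP := (mdot_le_norm_mul_norm B (svkP G L F)).trans
    (mul_le_mul_of_nonneg_left (norm_svkP_le G L F) (norm_nonneg B))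
  have hFF : (G + L / 2) / (2 * d) * ‖F‖ ^ 4 ≤ (G + L / 2) / 2 * ‖Fᵀ * F‖ ^ 2 := by
    calc (G + L / 2) / (2 * d) * ‖F‖ ^ 4 ≤ (G + L / 2) / (2 * d) * (d * ‖Fᵀ * F‖ ^ 2) := by
          gcongr; exact norm_pow_four_le F
      _ = (G + L / 2) / 2 * ‖Fᵀ * F‖ ^ 2 := by field_simp
  rw [svkObjective_zero_right]
  nlinarith [mdot_le_norm_mul_norm A F]

lemma le_svkObjective_smul_self (hd : 0 < d) {t : ℝ} (ht : 0 ≤ t)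
    (htG : (G + L / 2) * t ≤ 2 * G) (htκ : (G + L / 2) * t ≤ G + L * d / 2) :
    (G + L * d / 2) * t ^ 3 / (2 * d) * ‖B‖ ^ 4 - t * ‖A‖ * ‖B‖
      - (G + L * d / 2) * t * ‖B‖ ^ 2 ≤ svkObjective G L A a B (t • B) 0 := by
  have hBB : ‖(t • B)ᵀ * (t • B)‖ ^ 2 = t ^ 4 * ‖Bᵀ * B‖ ^ 2 := by
    rw [transpose_smul, Matrix.smul_mul, Matrix.mul_smul, smul_smul, norm_smul,
      Real.norm_eq_abs, mul_pow, sq_abs]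
    ring
  have hquartic : (2 * G - (G + L / 2) * t) * t ^ 3 * ‖B‖ ^ 4
      ≤ (2 * G - (G + L / 2) * t) * t ^ 3 * (d * ‖Bᵀ * B‖ ^ 2) :=
    mul_le_mul_of_nonneg_left (norm_pow_four_le B) (mul_nonneg (by linarith) (pow_nonneg ht 3))
  have hslack : 0 ≤ (G + L * d / 2 - (G + L / 2) * t) * (t ^ 3 * ‖B‖ ^ 4) :=
    mul_nonneg (by linarith) (by positivity)
  have hcoercive : (G + L * d / 2) * t ^ 3 / (2 * d) * ‖B‖ ^ 4 ≤ G * t ^ 3 * ‖Bᵀ * B‖ ^ 2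
      + L / 2 * t ^ 3 * ‖B‖ ^ 4 - (G + L / 2) / 2 * (t ^ 4 * ‖Bᵀ * B‖ ^ 2) := by
    rw [div_mul_eq_mul_div, div_le_iff₀ (by positivity)]
    linarith
  rw [svkObjective_zero_right, mdot_smul_right, mdot_svkP_smul, hBB]
  nlinarith [neg_norm_mul_norm_le_mdot A B]

-- For `u = 0` the test matrix is `0` (as `θ / 0 = 0`) and both sides vanish.
lemma le_svkObjective_smul (hμ : 0 ≤ G + L / 2) {θ u : ℝ} (hθ : 0 ≤ θ) (hu : 0 ≤ u)
    (hA : ‖A‖ = u ^ 3) :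
    θ * u ^ 4 - ‖B‖ * ((|G| + |L| / 2) * (θ * u) ^ 3 + |G + L * d / 2| * (θ * u))
      - (G + L / 2) / 2 * (θ * u) ^ 4 ≤ svkObjective G L A a B ((θ / u ^ 2) • A) 0 := by
  have hF : ‖(θ / u ^ 2) • A‖ = θ * u := by
    rw [norm_smul, hA, Real.norm_eq_abs, abs_of_nonneg (by positivity)]
    rcases hu.eq_or_lt with rfl | hu
    · simp
    · field_simp
  have hAF : mdot A ((θ / u ^ 2) • A) = θ * u ^ 4 := by
    rw [mdot_smul_right, mdot_self, hA]
    rcases hu.eq_or_lt with rfl | hu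
    · simp
    · field_simp
  have := le_svkObjective_zero_right G L A a B hμ ((θ / u ^ 2) • A)
  rwa [hF, hAF] at this

lemma bddAbove_svkSet (hd : 0 < d) (hμ : 0 < G + L / 2) : BddAbove (svkSet G L A a B) := by
  set β := ‖A‖ + ‖B‖ * |G + L * d / 2|
  set γ := ‖B‖ * (|G| + |L| / 2)
  set m := (G + L / 2) / (2 * d)
  refine ⟨(‖a‖ + ‖a‖ ^ 4 / (1 / 4) ^ 3) + ((β + γ) + (β + γ) ^ 4 / m ^ 3), ?_⟩
  rintro _ ⟨F, y, rfl⟩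
  change svkObjective G L A a B F y ≤ _
  have hy : svkObjective G L A a B 0 y ≤ ‖a‖ + ‖a‖ ^ 4 / (1 / 4) ^ 3 := by
    have := mul_add_mul_pow_three_sub_le (norm_nonneg a) le_rfl (by norm_num : (0 : ℝ) < 1 / 4)
      (norm_nonneg y)
    simp only [add_zero, zero_mul] at this
    rw [svkObjective_zero_left]
    linarith [real_inner_le_norm y a, mul_comm ‖y‖ ‖a‖]
  have hF := (svkObjective_zero_right_le G L A a B hd hμ.le F).trans
    (mul_add_mul_pow_three_sub_le (by positivity) (by positivity) (by positivity) (norm_nonneg F))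
  exact (svkObjective_eq_add G L A a B F y).trans_le (add_le_add hy hF)

lemma le_sSup_svkSet (h : BddAbove (svkSet G L A a B)) (F : Matrix (Fin d) (Fin d) ℝ)
    (y : EuclideanSpace ℝ (Fin d)) : svkObjective G L A a B F y ≤ sSup (svkSet G L A a B) :=
  le_csSup h ⟨F, y, rfl⟩

lemma sSup_svkSet_test_bounds (hd : 0 < d) (hμ : 0 < G + L / 2) {t : ℝ} (ht : 0 ≤ t)
    (htG : (G + L / 2) * t ≤ 2 * G) (htκ : (G + L / 2) * t ≤ G + L * d / 2) {w u : ℝ}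
    (hw : 0 ≤ w) (hu : 0 ≤ u) (ha : ‖a‖ = w ^ 3) (hA : ‖A‖ = u ^ 3) :
    3 / 4 * w ^ 4 ≤ sSup (svkSet G L A a B) ∧
    (G + L * d / 2) * t ^ 3 / (2 * d) * ‖B‖ ^ 4 - t * u ^ 3 * ‖B‖
      - (G + L * d / 2) * t * ‖B‖ ^ 2 ≤ sSup (svkSet G L A a B) ∧
    ∀ θ, 0 ≤ θ → θ * u ^ 4 - ‖B‖ * ((|G| + |L| / 2) * (θ * u) ^ 3 + |G + L * d / 2| * (θ * u))
      - (G + L / 2) / 2 * (θ * u) ^ 4 ≤ sSup (svkSet G L A a B) := by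
  have hbdd := bddAbove_svkSet G L A a B hd hμ
  refine ⟨?_, ?_, fun θ hθ => ?_⟩
  · rw [← svkObjective_zero_smul_self G L A a B hw ha]
    exact le_sSup_svkSet G L A a B hbdd _ _
  · rw [← hA]
    exact (le_svkObjective_smul_self G L A a B hd ht htG htκ).trans
      (le_sSup_svkSet G L A a B hbdd _ _)
  · exact (le_svkObjective_smul G L A a B hμ.le hθ hu hA).trans
      (le_sSup_svkSet G L A a B hbdd _ _)

end

lemma rpow_one_third_pow {x : ℝ} (hx : 0 ≤ x) :
    (x ^ (1 / 3 : ℝ)) ^ 3 = x ∧ (x ^ (1 / 3 : ℝ)) ^ 4 = x ^ (4 / 3 : ℝ) := by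
  simp only [← Real.rpow_natCast, ← Real.rpow_mul hx]
  norm_num

lemma svkSet_fin_zero (G L : ℝ) (A B : Matrix (Fin 0) (Fin 0) ℝ) (a : EuclideanSpace ℝ (Fin 0)) :
    svkSet G L A a B = {0} := by
  simp [svkSet, svkH, mdot, frob, Subsingleton.elim _ (0 : EuclideanSpace ℝ (Fin 0))]

theorem svk_dual_integrand_lower_bound (d : ℕ) (G L : ℝ)
    (hG : 0 < G) (hGL : 0 < G + d * L / 2) :
    ∃ c : ℝ, 0 < c ∧
      ∀ (A B : Matrix (Fin d) (Fin d) ℝ) (a : EuclideanSpace ℝ (Fin d)),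
        c * (‖a‖ ^ ((4:ℝ)/3) + frob A ^ ((4:ℝ)/3) + frob B ^ 4) - 1 / c
          ≤ sSup (svkSet G L A a B) := by
  rcases Nat.eq_zero_or_pos d with rfl | hd
  · exact ⟨1, one_pos, fun A B a => by simp [svkSet_fin_zero, frob, Subsingleton.elim a 0]⟩
  have hκ : 0 < G + L * d / 2 := by linarith [mul_comm (d : ℝ) L]
  have hμ : 0 < G + L / 2 := by
    have : (1 : ℝ) ≤ d := by exact_mod_cast hd
    rcases le_or_gt 0 L with hL | hL <;> nlinarith
  obtain ⟨t, ht, htG, htκ⟩ :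
      ∃ t > 0, (G + L / 2) * t ≤ 2 * G ∧ (G + L / 2) * t ≤ G + L * d / 2 :=
    ⟨min G (G + L * d / 2) / (G + L / 2), by positivity,
      by rw [mul_div_cancel₀ _ hμ.ne']; linarith [min_le_left G (G + L * d / 2)],
      by rw [mul_div_cancel₀ _ hμ.ne']; exact min_le_right _ _⟩
  obtain ⟨c₀, hc₀, K, hK, hquartic⟩ := exists_quartic_lower_bound (r := (G + L * d / 2) * t)
    (by positivity : 0 < (G + L * d / 2) * t ^ 3 / (2 * d)) ht.le
    (by positivity : 0 ≤ |G| + |L| / 2) (abs_nonneg (G + L * d / 2))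
    (by positivity : 0 ≤ (G + L / 2) / 2)
  obtain ⟨c, hc, hS⟩ := exists_lower_bound_of_quartic hc₀ hK
  refine ⟨c, hc, fun A B a => ?_⟩
  obtain ⟨hw3, hw4⟩ := rpow_one_third_pow (norm_nonneg a)
  obtain ⟨hu3, hu4⟩ := rpow_one_third_pow (norm_nonneg A)
  obtain ⟨ha, hB, hA⟩ := sSup_svkSet_test_bounds G L A a B hd hμ ht.le htG htκ
    (by positivity) (by positivity) hw3.symm hu3.symm
  rw [frob_eq_norm, frob_eq_norm, ← hw4, ← hu4, add_assoc]
  exact hS _ _ _ (by positivity) (by positivity) ha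
    (hquartic _ _ _ (by positivity) (norm_nonneg B) hB hA)
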